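/- arXiv:1810.05036 — 2 statements merged into one kernel-verified Lean document; each statement's English description precedes it below -/
import Mathlib

section
/- If λ is a cardinal, j : V → M is an ultrapower embedding with M closed under λ-sequences, and D is a countably complete ultrafilter on an ordinal γ ≤ λ, and there is a semicomparison (k,i) : (M_D, M) → N of (j_D, j) such that k([id]_D) ∈ i(j[λ]), then D ∈ M. -/
open FirstOrder

namespace UAPaper

open Cardinal

/-- The universe of sets. -/
abbrev ZS : Type 1 := ZFSet.{0}

/-! ### The first-order language of set theory (one binary relation) -/

def setLang : Language where
  Functions := fun _ => Empty
  Relations := fun n => match n with | 2 => PUnit | _ => Empty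

def setStructure (α : Type*) (r : α → α → Prop) : setLang.Structure α where
  funMap := fun f _ => f.elim
  RelMap := fun {n} R v =>
    match n, R, v with
    | 2, _, v => r (v 0) (v 1)

/-- `j : α → β` is elementary with respect to the membership-like relations
`ra` and `rb`: it preserves the truth of all first-order formulas in the
language of set theory. -/
def ElemOn {α β : Type*} (ra : α → α → Prop) (rb : β → β → Prop) (j : α → β) : Prop :=
  letI := setStructure α ra
  letI := setStructure β rb
  ∀ (n : ℕ) (φ : setLang.Formula (Fin n)) (v : Fin n → α),
    φ.Realize (j ∘ v) ↔ φ.Realize v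

/-! ### ZFSet-coded basics -/

/-- `x` is a (von Neumann) ordinal. -/
def IsOrd (x : ZS) : Prop := x.IsTransitive ∧ ∀ y ∈ x, ZFSet.IsTransitive y

/-- ordinal comparison `a ≤ b`. -/
def zle (a b : ZS) : Prop := a ∈ b ∨ a = b

/-- `x` is a cardinal: an ordinal not in bijection with any smaller ordinal. -/
def IsCardZ (x : ZS) : Prop := IsOrd x ∧ ∀ y ∈ x, #y.toSet < #x.toSet

/-- `b` is the cardinal successor of `a`. -/
def CardSuccOf (a b : ZS) : Prop := IsCardZ b ∧ #b.toSet = Order.succ #a.toSet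

/-- The cofinality of the ordinal `δ` is at least `#κ`: every cofinal subset of `δ`
has cardinality at least that of `κ`. -/
def CofGE (δ κ : ZS) : Prop :=
  ∀ s : Set ZS, (∀ x ∈ s, x ∈ δ) → (∀ x, x ∈ δ → ∃ y ∈ s, x ∈ y ∨ x = y) →
    #κ.toSet ≤ #s

/-- The cofinality of the ordinal `α` is exactly (the cardinality of) `κ`. -/
def CofEq (α κ : ZS) : Prop :=
  CofGE α κ ∧ ∃ s : Set ZS, (∀ x ∈ s, x ∈ α) ∧
    (∀ x, x ∈ α → ∃ y ∈ s, x ∈ y ∨ x = y) ∧ #s ≤ #κ.toSet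

/-- `F` is a (set-coded) function with domain `A`. -/
def IsFunc (F A : ZS) : Prop :=
  (∀ p ∈ F, ∃ x, x ∈ A ∧ ∃ y, p = ZFSet.pair x y) ∧
  ∀ x, x ∈ A → ∃! y, ZFSet.pair x y ∈ F

/-- `F` is a set-coded function from `A` to `B`. -/
def IsFuncTo (F A B : ZS) : Prop :=
  IsFunc F A ∧ ∀ x y, ZFSet.pair x y ∈ F → y ∈ B

/-- The set-coded constant function on `A` with value `v`. -/
noncomputable def constFn (A v : ZS) : ZS :=
  @ZFSet.image (fun x => ZFSet.pair x v) (Classical.allZFSetDefinable _) A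

/-- The image `j[A]` of a set `A` under a class function `j`. -/
noncomputable def zimage (j : ZS → ZS) (A : ZS) : ZS :=
  @ZFSet.image j (Classical.allZFSetDefinable _) A

/-- A class `M` is transitive. -/
def IsTransClass (M : ZS → Prop) : Prop := ∀ x, M x → ∀ y ∈ x, M y

/-- `M` (a class) is closed under `λ`-sequences: every set function with domain `lam`
taking values in `M` belongs to `M`.  (`M^λ ⊆ M`.) -/
def ClosedUnderSeq (M : ZS → Prop) (lam : ZS) : Prop :=
  ∀ F, IsFunc F lam → (∀ x y, ZFSet.pair x y ∈ F → M y) → M F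

/-! ### Set-coded ultrafilters and ultrapowers -/

/-- `D` is an ultrafilter on the set `A`. -/
structure IsUF (D A : ZS) : Prop where
  subsets : ∀ X ∈ D, X ⊆ A
  univ_mem : A ∈ D
  empty_not_mem : ∅ ∉ D
  inter_mem : ∀ X ∈ D, ∀ Y ∈ D, X ∩ Y ∈ D
  superset_mem : ∀ X ∈ D, ∀ Y, X ⊆ Y → Y ⊆ A → Y ∈ D
  total : ∀ X, X ⊆ A → X ∈ D ∨ A \ X ∈ D

/-- `D` is a countably complete ultrafilter on `A`. -/
def IsCCUF (D A : ZS) : Prop :=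
  IsUF D A ∧ ∀ s : ℕ → ZS, (∀ n, s n ∈ D) →
    ZFSet.sep (fun x => ∀ n, x ∈ s n) A ∈ D

/-- `D` is `κ`-complete on `A`. -/
def IsKComplete (D A κ : ZS) : Prop :=
  ∀ s : Set ZS, (∀ X ∈ s, X ∈ D) → #s < #κ.toSet →
    ZFSet.sep (fun x => ∀ X ∈ s, x ∈ X) A ∈ D

/-- Functions (in `V`) with domain the set `A`. -/
def Fn (A : ZS) : Type 1 := {x : ZS // x ∈ A} → ZS

/-- The `D`-large set where `f` and `g` agree. -/
def agreeSet (A : ZS) (f g : Fn A) : ZS :=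
  ZFSet.sep (fun x => ∀ h : x ∈ A, f ⟨x, h⟩ = g ⟨x, h⟩) A

/-- The `D`-large set where `f x ∈ g x`. -/
def memSet (A : ZS) (f g : Fn A) : ZS :=
  ZFSet.sep (fun x => ∀ h : x ∈ A, f ⟨x, h⟩ ∈ g ⟨x, h⟩) A

/-- The ultrapower of the universe `V` by the coded ultrafilter `D` on `A`,
formed using all functions with domain `A`. -/
def Ult (D A : ZS) : Type 1 := Quot (fun f g : Fn A => agreeSet A f g ∈ D)

/-- Membership between elements of the ultrapower. -/
def memUlt (D A : ZS) (a b : Ult D A) : Prop :=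
  ∃ f g : Fn A, a = Quot.mk _ f ∧ b = Quot.mk _ g ∧ memSet A f g ∈ D

/-- The canonical ultrapower embedding `j_D : V → M_D` (at the quotient level). -/
def jUlt (D A : ZS) (x : ZS) : Ult D A := Quot.mk _ fun _ => x

/-- `[id]_D`, the element of the ultrapower represented by the identity function. -/
def idUlt (D A : ZS) : Ult D A := Quot.mk _ fun p => p.1

/-- `F` is a set-code for the function `f : A → V`. -/
def CodesFn (F A : ZS) (f : Fn A) : Prop :=
  (∀ p ∈ F, ∃ x, ∃ h : x ∈ A, p = ZFSet.pair x (f ⟨x, h⟩)) ∧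
  ∀ x, ∀ h : x ∈ A, ZFSet.pair x (f ⟨x, h⟩) ∈ F

/-- `RepIn M D A a f` : the set `a` is the transitive collapse of the point of the
ultrapower of `M` by `D` (using functions coded in `M`) represented by `f`.
Defined by ∈-recursion.  Taking `M = V` (i.e. `fun _ => True`) gives the
full ultrapower of the universe. -/
def RepIn (M : ZS → Prop) (D A : ZS) : ZS → Fn A → Prop :=
  ZFSet.mem_wf.fix
    (C := fun _ => Fn A → Prop)
    (fun a rec f =>
      (∀ b, ∀ hb : b ∈ a, ∃ g : Fn A, (∃ G, M G ∧ CodesFn G A g) ∧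
        memSet A g f ∈ D ∧ rec b hb g) ∧
      (∀ g : Fn A, (∃ G, M G ∧ CodesFn G A g) → memSet A g f ∈ D →
        ∃ b, ∃ hb : b ∈ a, rec b hb g))

/-- `a` is the collapse of the point of `M_D = Ult(V, D)` represented by `f`. -/
def Rep (D A : ZS) (a : ZS) (f : Fn A) : Prop :=
  RepIn (fun _ => True) D A a f

/-- The class `M_D`: the transitive collapse of the ultrapower of `V` by `D`. -/
def InUlt (D A : ZS) (a : ZS) : Prop := ∃ f : Fn A, Rep D A a f

/-- Membership relation on (the subclass of `V` given by) a class `M`. -/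
def ClassMem (M : ZS → Prop) : {x : ZS // M x} → {x : ZS // M x} → Prop :=
  fun a b => a.1 ∈ b.1

/-- `i` restricts to an elementary embedding from the class `M` to the class `N`. -/
def IsElemClassEmb (M N : ZS → Prop) (i : ZS → ZS) : Prop :=
  ∃ h : ∀ x, M x → N (i x),
    ElemOn (ClassMem M) (ClassMem N) (fun a => ⟨i a.1, h a.1 a.2⟩)

/-- `i : M → N` is an internal ultrapower embedding of the (transitive) class `M`:
there are `A, D ∈ M` with `D` a countably complete ultrafilter on `A` such that
`N` is the (collapsed) ultrapower of `M` by `D` computed using functions in `M`,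
and `i` is the associated canonical embedding. -/
def IsInternalUltrapowerEmb (M N : ZS → Prop) (i : ZS → ZS) : Prop :=
  ∃ A D : ZS, M A ∧ M D ∧ IsCCUF D A ∧
    (∀ a, N a ↔ ∃ f : Fn A, (∃ G, M G ∧ CodesFn G A f) ∧ RepIn M D A a f) ∧
    (∀ x, M x → RepIn M D A (i x) (fun _ => x))

/-- `j : V → M` is an ultrapower embedding of the universe by a countably
complete ultrafilter. -/
def IsUltrapowerEmbV (M : ZS → Prop) (j : ZS → ZS) : Prop :=
  IsInternalUltrapowerEmb (fun _ => True) M j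

/-- `(i0, i1) : (M0, M1) → N` is a semicomparison of `(j0 : V → M0, j1 : V → M1)`:
`i0` is elementary, `i1` is an internal ultrapower embedding of `M1`, and
`i0 ∘ j0 = i1 ∘ j1`. -/
structure Semicomparison (M0 M1 N : ZS → Prop) (j0 j1 i0 i1 : ZS → ZS) : Prop where
  elem0 : IsElemClassEmb M0 N i0
  internal1 : IsInternalUltrapowerEmb M1 N i1
  comm : ∀ x, i0 (j0 x) = i1 (j1 x)

/-- A comparison of `(j0, j1)` : both `(i0,i1)` and `(i1,i0)` are semicomparisons. -/
def Comparison (M0 M1 N : ZS → Prop) (j0 j1 i0 i1 : ZS → ZS) : Prop :=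
  Semicomparison M0 M1 N j0 j1 i0 i1 ∧ Semicomparison M1 M0 N j1 j0 i1 i0

/-- The Ultrapower Axiom: every pair of ultrapower embeddings admits a comparison. -/
def UA : Prop :=
  ∀ (M0 M1 : ZS → Prop) (j0 j1 : ZS → ZS),
    IsUltrapowerEmbV M0 j0 → IsUltrapowerEmbV M1 j1 →
    ∃ (N : ZS → Prop) (i0 i1 : ZS → ZS),
      Comparison M0 M1 N j0 j1 i0 i1

/-! ### Supercompactness and normal fine ultrafilters -/

/-- An elementary embedding of `V` into a transitive class `M`. -/
def IsElemEmbV (M : ZS → Prop) (j : ZS → ZS) : Prop :=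
  IsTransClass M ∧ IsElemClassEmb (fun _ => True) M j

/-- `κ` is `lam`-supercompact: there is an elementary `j : V → M` with critical
point `κ`, `j(κ) > lam`, and `M` closed under `lam`-sequences. -/
def IsSupercompact (κ lam : ZS) : Prop :=
  ∃ (M : ZS → Prop) (j : ZS → ZS), IsElemEmbV M j ∧
    (∀ x ∈ κ, j x = x) ∧ κ ∈ j κ ∧ lam ∈ j κ ∧ ClosedUnderSeq M lam

/-- `P_κ(δ)` : the set of subsets of `δ` of cardinality less than `κ`. -/
noncomputable def Pk (κ δ : ZS) : ZS :=
  ZFSet.sep (fun x => #x.toSet < #κ.toSet) (ZFSet.powerset δ)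

/-- `D` is a normal fine `κ`-complete ultrafilter on `P_κ(δ)`. -/
structure IsNFUF (D κ δ : ZS) : Prop where
  uf : IsUF D (Pk κ δ)
  cc : IsCCUF D (Pk κ δ)
  kcomplete : IsKComplete D (Pk κ δ) κ
  fine : ∀ α ∈ δ, ZFSet.sep (fun σ => α ∈ σ) (Pk κ δ) ∈ D
  normal : ∀ f : ZS → ZS,
    ZFSet.sep (fun σ => f σ ∈ σ) (Pk κ δ) ∈ D →
    ∃ α ∈ δ, ZFSet.sep (fun σ => f σ = α) (Pk κ δ) ∈ D

end UAPaper

namespace UAPaper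

open Cardinal

/-- `D` is uniform on `A`: every member has full cardinality. -/
def UniformOn (D A : ZS) : Prop := ∀ X ∈ D, #X.toSet = #A.toSet

/-- A uniform ultrafilter `D` on the cardinal `μ` is seed-minimal if no regressive
function is one-to-one on a `D`-large set. -/
def SeedMinimal (D μ : ZS) : Prop :=
  ∀ f : ZS → ZS, (∀ x, x ∈ μ → x ≠ ∅ → f x ∈ x) →
    ∀ X ∈ D, ¬ Set.InjOn f X.toSet

/-- `D` (on `A`) and `E` (on `B`) are isomorphic in the Rudin–Keisler sense, via a
map which is a bijection between sets in the respective ultrafilters. -/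
def UFIso (D A E B : ZS) : Prop :=
  ∃ (h : ZS → ZS) (X Y : ZS), X ∈ D ∧ Y ∈ E ∧
    Set.BijOn h X.toSet Y.toSet ∧
    ∀ Z : ZS, Z ⊆ B → (Z ∈ E ↔ ZFSet.sep (fun x => h x ∈ Z) A ∈ D)

/-! ### Clubs, stationary sets and diamond -/

/-- A club subset of the (ZFSet) ordinal `lam`. -/
def ZClub (lam : ZS) (C : Set ZS) : Prop :=
  (∀ x ∈ C, x ∈ lam) ∧
  (∀ x, x ∈ lam → ∃ y ∈ C, x ∈ y ∨ x = y) ∧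
  (∀ β, β ∈ lam → β ≠ ∅ → (∀ z ∈ β, ∃ y ∈ C, y ∈ β ∧ (z ∈ y ∨ z = y)) → β ∈ C)

/-- A stationary subset of the (ZFSet) ordinal `lam`. -/
def ZStationary (lam : ZS) (S : Set ZS) : Prop :=
  (∀ x ∈ S, x ∈ lam) ∧ ∀ C, ZClub lam C → (S ∩ C).Nonempty

/-- Jensen's diamond on the set `S ⊆ lam` (for ZFSet ordinals). -/
def ZDiamond (lam : ZS) (S : Set ZS) : Prop :=
  ∃ A : ZS → ZS, (∀ α, α ∈ S → A α ⊆ α) ∧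
    ∀ X : ZS, X ⊆ lam → ZStationary lam {α | α ∈ S ∧ X ∩ α = A α}

/-- A club subset of the ordinal `lam` (Mathlib ordinals). -/
def IsClub (lam : Ordinal) (C : Set Ordinal) : Prop :=
  (∀ α ∈ C, α < lam) ∧
  (∀ α, α < lam → ∃ β ∈ C, α < β) ∧
  (∀ β, β < lam → 0 < β → (∀ γ, γ < β → ∃ δ ∈ C, γ < δ ∧ δ < β) → β ∈ C)

/-- A stationary subset of the ordinal `lam`. -/
def IsStationary (lam : Ordinal) (S : Set Ordinal) : Prop :=
  (∀ α ∈ S, α < lam) ∧ ∀ C, IsClub lam C → (S ∩ C).Nonempty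

/-- Jensen's diamond principle `◇(S)` for `S ⊆ lam`. -/
def Diamond (lam : Ordinal) (S : Set Ordinal) : Prop :=
  ∃ A : Ordinal → Set Ordinal, (∀ α ∈ S, A α ⊆ Set.Iio α) ∧
    ∀ X : Set Ordinal, X ⊆ Set.Iio lam →
      IsStationary lam {α ∈ S | X ∩ Set.Iio α = A α}

/-- Kunen's `◇⁻(S)` for `S ⊆ lam`. -/
def DiamondMinus (lam : Ordinal) (S : Set Ordinal) : Prop :=
  ∃ 𝒜 : Ordinal → Set (Set Ordinal),
    (∀ α ∈ S, ∀ a ∈ 𝒜 α, a ⊆ Set.Iio α) ∧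
    (∀ α ∈ S, #(𝒜 α) ≤ #(Set.Iio α)) ∧
    ∀ X : Set Ordinal, X ⊆ Set.Iio lam →
      IsStationary lam {α ∈ S | X ∩ Set.Iio α ∈ 𝒜 α}

end UAPaper

/-!
Write `k(ξ) = [g]_E` in the internal ultrapower of `M` by `E` that gives `i`. Since
`k(ξ) ∈ i(j[λ])`, almost every `g(b)` is `j(π(b))` for some `π(b) < λ`, and for every `Z`,
`π(b) ∈ Z` for `E`-almost all `b` implies `k(ξ) ∈ i(j(Z)) = k(j_D(Z))`, i.e. `ξ ∈ j_D(Z)`, i.e.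
`Z ∈ D`. So `D` is the pushforward `π_*(E)`: `X ∈ D` iff `{b : g(b) ∈ j[X]} ∈ E`.
As `M^λ ⊆ M`, the map `j ↾ λ` lies in `M`, and with it every subset of `λ` and the set `j[X]`
for `X ⊆ λ`; so this description of `D` is computed inside `M` from `j ↾ λ`, `g`, `E` and `γ`,
and `D ∈ M`. Membership in `M` is checked through Łoś's theorem for the few formulas involved.
-/

namespace UAPaper

open scoped ZFSet

section Ultrafilter

variable {D A : ZS}

def sepOn (A : ZS) (P : {x : ZS // x ∈ A} → Prop) : ZS :=
  ZFSet.sep (fun x => ∀ h : x ∈ A, P ⟨x, h⟩) A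

theorem mem_sepOn {P : {x : ZS // x ∈ A} → Prop} {x : ZS} :
    x ∈ sepOn A P ↔ ∃ h : x ∈ A, P ⟨x, h⟩ := by
  simp only [sepOn, ZFSet.mem_sep]
  exact ⟨fun ⟨hx, hP⟩ => ⟨hx, hP hx⟩, fun ⟨hx, hP⟩ => ⟨hx, fun _ => hP⟩⟩

theorem sepOn_subset {P : {x : ZS // x ∈ A} → Prop} : sepOn A P ⊆ A :=
  fun _ hx => (mem_sepOn.1 hx).1

theorem IsUF.sepOn_mono (h : IsUF D A) {P Q : {x : ZS // x ∈ A} → Prop} (hP : sepOn A P ∈ D)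
    (hPQ : ∀ p, P p → Q p) : sepOn A Q ∈ D :=
  h.superset_mem _ hP _ (fun x hx => by
    obtain ⟨hxA, hx⟩ := mem_sepOn.1 hx
    exact mem_sepOn.2 ⟨hxA, hPQ _ hx⟩) sepOn_subset

-- Chosen so that `memSet A f g ∈ D` is definitionally `∀ᶠ p in h.toUltrafilter, f p ∈ g p`.
def IsUF.toUltrafilter (h : IsUF D A) : Ultrafilter {x : ZS // x ∈ A} :=
  Ultrafilter.ofComplNotMemIff
    { sets := {S | sepOn A (· ∈ S) ∈ D}
      univ_sets := h.superset_mem _ h.univ_mem _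
        (fun x hx => mem_sepOn.2 ⟨hx, Set.mem_univ _⟩) sepOn_subset
      sets_of_superset := fun hS hST => h.sepOn_mono hS fun _ hp => hST hp
      inter_sets := fun hS hT => h.superset_mem _ (h.inter_mem _ hS _ hT) _ (fun x hx => by
        obtain ⟨hxA, hxS⟩ := mem_sepOn.1 (ZFSet.mem_inter.1 hx).1
        obtain ⟨_, hxT⟩ := mem_sepOn.1 (ZFSet.mem_inter.1 hx).2
        exact mem_sepOn.2 ⟨hxA, hxS, hxT⟩) sepOn_subset }
    fun S => by
      change sepOn A (· ∈ Sᶜ) ∉ D ↔ sepOn A (· ∈ S) ∈ D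
      constructor
      · intro hSc
        refine (h.total _ sepOn_subset).resolve_right fun hc => hSc (h.superset_mem _ hc _
          (fun x hx => ?_) sepOn_subset)
        obtain ⟨hxA, hxS⟩ := ZFSet.mem_sdiff.1 hx
        exact mem_sepOn.2 ⟨hxA, fun h' => hxS (mem_sepOn.2 ⟨hxA, h'⟩)⟩
      · intro hS hSc
        refine h.empty_not_mem (h.superset_mem _ (h.inter_mem _ hS _ hSc) _ (fun x hx => ?_)
          (ZFSet.empty_subset _))
        obtain ⟨_, hxS⟩ := mem_sepOn.1 (ZFSet.mem_inter.1 hx).1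
        obtain ⟨_, hxSc⟩ := mem_sepOn.1 (ZFSet.mem_inter.1 hx).2
        exact (hxSc hxS).elim

theorem IsUF.sepOn_mem_iff (h : IsUF D A) {P : {x : ZS // x ∈ A} → Prop} :
    sepOn A P ∈ D ↔ ∀ᶠ p in h.toUltrafilter, P p :=
  Iff.rfl

theorem IsUF.mem_iff_eventually (h : IsUF D A) {S : ZS} (hS : S ⊆ A) :
    S ∈ D ↔ ∀ᶠ p : {x : ZS // x ∈ A} in h.toUltrafilter, p.1 ∈ S := by
  have hSep : sepOn A (fun p : {x : ZS // x ∈ A} => p.1 ∈ S) = S :=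
    ZFSet.ext fun x => ⟨fun hx => (mem_sepOn.1 hx).2, fun hx => mem_sepOn.2 ⟨hS hx, hx⟩⟩
  rw [← h.sepOn_mem_iff, hSep]

theorem IsUF.eq_sep_powerset (h : IsUF D A) {P : ZS → Prop} (hP : ∀ X ⊆ A, X ∈ D ↔ P X) :
    D = ZFSet.sep P (ZFSet.powerset A) :=
  ZFSet.ext fun X => by
    rw [ZFSet.mem_sep, ZFSet.mem_powerset]
    exact ⟨fun hX => ⟨h.subsets X hX, (hP X (h.subsets X hX)).1 hX⟩,
      fun ⟨hX, hPX⟩ => (hP X hX).2 hPX⟩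

end Ultrafilter

theorem mem_zimage {f : ZS → ZS} {A y : ZS} : y ∈ zimage f A ↔ ∃ x ∈ A, f x = y :=
  @ZFSet.mem_image _ (Classical.allZFSetDefinable _) A y

def Coded (Mc : ZS → Prop) (A : ZS) (g : Fn A) : Prop := ∃ G, Mc G ∧ CodesFn G A g

theorem coded_true {A : ZS} (g : Fn A) : Coded (fun _ => True) A g := by
  classical
  refine ⟨zimage (fun x => ZFSet.pair x (if h : x ∈ A then g ⟨x, h⟩ else ∅)) A, trivial,
    fun p hp => ?_, fun x hx => mem_zimage.2 ⟨x, hx, by rw [dif_pos hx]⟩⟩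
  obtain ⟨x, hx, rfl⟩ := mem_zimage.1 hp
  exact ⟨x, hx, by rw [dif_pos hx]⟩

section RepIn

variable {Mc : ZS → Prop} {D A : ZS}

theorem repIn_iff {a : ZS} {f : Fn A} :
    RepIn Mc D A a f ↔
      (∀ b ∈ a, ∃ g : Fn A, Coded Mc A g ∧ memSet A g f ∈ D ∧ RepIn Mc D A b g) ∧
      ∀ g : Fn A, Coded Mc A g → memSet A g f ∈ D → ∃ b ∈ a, RepIn Mc D A b g := by
  unfold RepIn
  rw [WellFounded.fix_eq]
  simp only [exists_prop]
  rfl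

theorem RepIn.unique {a : ZS} : ∀ {f : Fn A} {b : ZS},
    RepIn Mc D A a f → RepIn Mc D A b f → a = b := by
  induction a using ZFSet.inductionOn with
  | _ a IH =>
    intro f b ha hb
    refine ZFSet.ext fun c => ⟨fun hc => ?_, fun hc => ?_⟩
    · obtain ⟨g, hg, hgf, hcg⟩ := (repIn_iff.1 ha).1 c hc
      obtain ⟨c', hc', hc'g⟩ := (repIn_iff.1 hb).2 g hg hgf
      exact IH c hc hcg hc'g ▸ hc'
    · obtain ⟨g, hg, hgf, hcg⟩ := (repIn_iff.1 hb).1 c hc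
      obtain ⟨c', hc', hc'g⟩ := (repIn_iff.1 ha).2 g hg hgf
      exact IH c' hc' hc'g hcg ▸ hc'

theorem RepIn.mem_of_memSet_mem {a b : ZS} {f g : Fn A} (ha : RepIn Mc D A a f)
    (hb : RepIn Mc D A b g) (hf : Coded Mc A f) (hfg : memSet A f g ∈ D) : a ∈ b := by
  obtain ⟨c, hc, hcf⟩ := (repIn_iff.1 hb).2 f hf hfg
  exact ha.unique hcf ▸ hc

end RepIn

section Rep

variable {D A : ZS} (hUF : IsUF D A)

theorem rep_iff {a : ZS} {f : Fn A} :
    Rep D A a f ↔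
      (∀ b ∈ a, ∃ g : Fn A, (∀ᶠ p in hUF.toUltrafilter, g p ∈ f p) ∧ Rep D A b g) ∧
      ∀ g : Fn A, (∀ᶠ p in hUF.toUltrafilter, g p ∈ f p) → ∃ b ∈ a, Rep D A b g :=
  repIn_iff.trans <| and_congr
    (forall₂_congr fun _ _ => exists_congr fun g => and_iff_right (coded_true g))
    (forall_congr' fun g => imp_iff_right (coded_true g))

variable {a b : ZS} {f g : Fn A}

theorem Rep.exists_rep_of_mem (ha : Rep D A a f) (hb : b ∈ a) :
    ∃ g : Fn A, (∀ᶠ p in hUF.toUltrafilter, g p ∈ f p) ∧ Rep D A b g :=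
  ((rep_iff hUF).1 ha).1 b hb

theorem Rep.exists_mem_of_eventually (ha : Rep D A a f)
    (hg : ∀ᶠ p in hUF.toUltrafilter, g p ∈ f p) : ∃ b ∈ a, Rep D A b g :=
  ((rep_iff hUF).1 ha).2 g hg

theorem Rep.eventually_eq : ∀ {f g : Fn A}, Rep D A a f → Rep D A a g →
    ∀ᶠ p in hUF.toUltrafilter, f p = g p := by
  induction a using ZFSet.inductionOn with
  | _ a IH =>
    have key : ∀ {f g h : Fn A}, Rep D A a f → Rep D A a g →
        ¬ ∀ᶠ p in hUF.toUltrafilter, h p ∈ f p ∧ h p ∉ g p := by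
      intro f g h hf hg hh
      obtain ⟨c, hc, hch⟩ := hf.exists_mem_of_eventually hUF (hh.mono fun _ hp => hp.1)
      obtain ⟨h', hh'g, hch'⟩ := hg.exists_rep_of_mem hUF hc
      obtain ⟨p, hp, he, hm⟩ := (hh.and ((IH c hc hch hch').and hh'g)).exists
      exact hp.2 (he ▸ hm)
    intro f g hf hg
    by_contra hne
    rw [← Ultrafilter.eventually_not] at hne
    have hwit : ∀ᶠ p in hUF.toUltrafilter,
        ∃ w, (w ∈ f p ∧ w ∉ g p) ∨ (w ∈ g p ∧ w ∉ f p) := hne.mono fun p hp => by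
      by_contra! hw
      exact hp (ZFSet.ext fun w => ⟨(hw w).1, (hw w).2⟩)
    obtain ⟨h, hh⟩ := hwit.choice
    rcases Ultrafilter.eventually_or.1 hh with hfg | hgf
    exacts [key hf hg hfg, key hg hf hgf]

theorem Rep.congr (hfg : ∀ᶠ p in hUF.toUltrafilter, f p = g p) (ha : Rep D A a f) :
    Rep D A a g := by
  refine (rep_iff hUF).2 ⟨fun b hb => ?_, fun h hh => ha.exists_mem_of_eventually hUF ?_⟩
  · obtain ⟨h, hh, hbh⟩ := ha.exists_rep_of_mem hUF hb
    exact ⟨h, by filter_upwards [hh, hfg] with p hm he using he ▸ hm, hbh⟩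
  · filter_upwards [hh, hfg] with p hm he using he ▸ hm

theorem Rep.mem_iff (ha : Rep D A a f) (hb : Rep D A b g) :
    a ∈ b ↔ ∀ᶠ p in hUF.toUltrafilter, f p ∈ g p := by
  constructor
  · intro hab
    obtain ⟨h, hhg, hah⟩ := hb.exists_rep_of_mem hUF hab
    filter_upwards [hah.eventually_eq hUF ha, hhg] with p he hm using he ▸ hm
  · intro hfg
    obtain ⟨c, hc, hcf⟩ := hb.exists_mem_of_eventually hUF hfg
    exact RepIn.unique ha hcf ▸ hc

theorem rep_empty (hUF : IsUF D A) : Rep D A ∅ fun _ => ∅ :=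
  (rep_iff hUF).2 ⟨fun _ hb => (ZFSet.notMem_empty _ hb).elim, fun _ hg =>
    let ⟨_, hp⟩ := hg.exists
    (ZFSet.notMem_empty _ hp).elim⟩

theorem Rep.insert (hUF : IsUF D A) {x s : ZS} {u t : Fn A} (hx : Rep D A x u) (hs : Rep D A s t) :
    Rep D A (insert x s) fun p => insert (u p) (t p) := by
  refine (rep_iff hUF).2 ⟨fun b hb => ?_, fun g hg => ?_⟩
  · rcases ZFSet.mem_insert_iff.1 hb with rfl | hb
    · exact ⟨u, .of_forall fun p => ZFSet.mem_insert _ _, hx⟩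
    · obtain ⟨g, hg, hbg⟩ := hs.exists_rep_of_mem hUF hb
      exact ⟨g, hg.mono fun p => ZFSet.mem_insert_of_mem _, hbg⟩
  · rcases Ultrafilter.eventually_or.1 (hg.mono fun p => ZFSet.mem_insert_iff.1) with hgu | hgt
    · exact ⟨x, ZFSet.mem_insert _ _, hx.congr hUF (hgu.mono fun _ h => h.symm)⟩
    · obtain ⟨b, hb, hbg⟩ := hs.exists_mem_of_eventually hUF hgt
      exact ⟨b, ZFSet.mem_insert_of_mem _ hb, hbg⟩

theorem Rep.pair (hUF : IsUF D A) {x y : ZS} {u v : Fn A} (hx : Rep D A x u) (hy : Rep D A y v) :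
    Rep D A (ZFSet.pair x y) fun p => ZFSet.pair (u p) (v p) :=
  (hx.insert hUF (rep_empty hUF)).insert hUF
    ((hx.insert hUF (hy.insert hUF (rep_empty hUF))).insert hUF (rep_empty hUF))

theorem Rep.sUnion (hUF : IsUF D A) (ha : Rep D A a f) : Rep D A (⋃₀ a) fun p => ⋃₀ f p := by
  refine (rep_iff hUF).2 ⟨fun b hb => ?_, fun g hg => ?_⟩
  · obtain ⟨c, hc, hbc⟩ := ZFSet.mem_sUnion.1 hb
    obtain ⟨h, hh, hch⟩ := ha.exists_rep_of_mem hUF hc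
    obtain ⟨g, hg, hbg⟩ := hch.exists_rep_of_mem hUF hbc
    exact ⟨g, by filter_upwards [hg, hh] with p h1 h2 using ZFSet.mem_sUnion_of_mem h1 h2, hbg⟩
  · obtain ⟨h, hh⟩ := (hg.mono fun _ hp => ZFSet.mem_sUnion.1 hp).choice
    obtain ⟨c, hc, hch⟩ := ha.exists_mem_of_eventually hUF (hh.mono fun _ hp => hp.1)
    obtain ⟨b, hb, hbg⟩ := hch.exists_mem_of_eventually hUF (hh.mono fun _ hp => hp.2)
    exact ⟨b, ZFSet.mem_sUnion_of_mem hb hc, hbg⟩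

variable {Φ : ZS → Prop} {φ : {x : ZS // x ∈ A} → ZS → Prop}

theorem Rep.sep (ha : Rep D A a f)
    (hΦ : ∀ b ∈ a, ∀ g : Fn A, Rep D A b g → (Φ b ↔ ∀ᶠ p in hUF.toUltrafilter, φ p (g p))) :
    Rep D A (ZFSet.sep Φ a) fun p => ZFSet.sep (φ p) (f p) := by
  refine (rep_iff hUF).2 ⟨fun b hb => ?_, fun g hg => ?_⟩
  · obtain ⟨hba, hΦb⟩ := ZFSet.mem_sep.1 hb
    obtain ⟨g, hg, hbg⟩ := ha.exists_rep_of_mem hUF hba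
    exact ⟨g, by filter_upwards [hg, (hΦ b hba g hbg).1 hΦb] with p h1 h2 using
      ZFSet.mem_sep.2 ⟨h1, h2⟩, hbg⟩
  · obtain ⟨b, hb, hbg⟩ :=
      ha.exists_mem_of_eventually hUF (hg.mono fun _ hp => (ZFSet.mem_sep.1 hp).1)
    exact ⟨b, ZFSet.mem_sep.2 ⟨hb, (hΦ b hb g hbg).2 (hg.mono fun _ hp => (ZFSet.mem_sep.1 hp).2)⟩,
      hbg⟩

theorem Rep.exists_mem_iff (ha : Rep D A a f)
    (hΦ : ∀ b ∈ a, ∀ g : Fn A, Rep D A b g → (Φ b ↔ ∀ᶠ p in hUF.toUltrafilter, φ p (g p))) :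
    (∃ b ∈ a, Φ b) ↔ ∀ᶠ p in hUF.toUltrafilter, ∃ y ∈ f p, φ p y := by
  constructor
  · rintro ⟨b, hb, hΦb⟩
    obtain ⟨g, hg, hbg⟩ := ha.exists_rep_of_mem hUF hb
    filter_upwards [hg, (hΦ b hb g hbg).1 hΦb] with p h1 h2 using ⟨g p, h1, h2⟩
  · intro h
    obtain ⟨g, hg⟩ := h.choice
    obtain ⟨b, hb, hbg⟩ := ha.exists_mem_of_eventually hUF (hg.mono fun _ hp => hp.1)
    exact ⟨b, hb, (hΦ b hb g hbg).2 (hg.mono fun _ hp => hp.2)⟩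

theorem Rep.subset_iff (ha : Rep D A a f) (hb : Rep D A b g) :
    a ⊆ b ↔ ∀ᶠ p in hUF.toUltrafilter, f p ⊆ g p := by
  constructor
  · intro hab
    by_contra hn
    rw [← Ultrafilter.eventually_not] at hn
    have hwit : ∀ᶠ p in hUF.toUltrafilter, ∃ w, w ∈ f p ∧ w ∉ g p := hn.mono fun p hp => by
      by_contra! hw
      exact hp fun w => hw w
    obtain ⟨h, hh⟩ := hwit.choice
    obtain ⟨c, hc, hch⟩ := ha.exists_mem_of_eventually hUF (hh.mono fun _ hp => hp.1)
    obtain ⟨p, hp, hpg⟩ := (hh.and ((hch.mem_iff hUF hb).1 (hab hc))).exists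
    exact hp.2 hpg
  · intro hfg c hc
    obtain ⟨h, hh, hch⟩ := ha.exists_rep_of_mem hUF hc
    exact (hch.mem_iff hUF hb).2 (by filter_upwards [hh, hfg] with p h1 h2 using h2 h1)

theorem Rep.exists_subset (ha : Rep D A a f) (hg : ∀ᶠ p in hUF.toUltrafilter, g p ⊆ f p) :
    ∃ b ⊆ a, Rep D A b g := by
  refine ⟨ZFSet.sep (fun c => ∃ h, Rep D A c h ∧ ∀ᶠ p in hUF.toUltrafilter, h p ∈ g p) a,
    ZFSet.sep_subset, ?_⟩
  refine (ha.sep hUF (φ := fun p y => y ∈ g p) fun c _ h hch => ⟨?_, fun hh => ⟨h, hch, hh⟩⟩).congr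
    hUF (hg.mono fun p hp => ZFSet.ext fun y => ⟨fun hy => (ZFSet.mem_sep.1 hy).2,
      fun hy => ZFSet.mem_sep.2 ⟨hp hy, hy⟩⟩)
  rintro ⟨h', hch', hh'⟩
  filter_upwards [hch'.eventually_eq hUF hch, hh'] with p he hm using he ▸ hm

theorem Rep.powerset (hUF : IsUF D A) (ha : Rep D A a f) (hsub : ∀ b ⊆ a, ∃ g : Fn A, Rep D A b g) :
    Rep D A (ZFSet.powerset a) fun p => ZFSet.powerset (f p) := by
  refine (rep_iff hUF).2 ⟨fun b hb => ?_, fun g hg => ?_⟩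
  · obtain ⟨g, hbg⟩ := hsub b (ZFSet.mem_powerset.1 hb)
    exact ⟨g, ((hbg.subset_iff hUF ha).1 (ZFSet.mem_powerset.1 hb)).mono
      fun _ => ZFSet.mem_powerset.2, hbg⟩
  · obtain ⟨b, hb, hbg⟩ := ha.exists_subset hUF (hg.mono fun _ => ZFSet.mem_powerset.1)
    exact ⟨b, ZFSet.mem_powerset.2 hb, hbg⟩

end Rep

section Relations

variable {F X Y x y : ZS}

def relImage (F X : ZS) : ZS := ZFSet.sep (fun y => ∃ x ∈ X, ZFSet.pair x y ∈ F) (⋃₀ ⋃₀ F)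

def relPreimage (F Y : ZS) : ZS := ZFSet.sep (fun x => ∃ y ∈ Y, ZFSet.pair x y ∈ F) (⋃₀ ⋃₀ F)

theorem mem_sUnion_sUnion_of_pair_mem (h : ZFSet.pair x y ∈ F) :
    x ∈ ⋃₀ ⋃₀ F ∧ y ∈ ⋃₀ ⋃₀ F := by
  have hxy : ({x, y} : ZS) ∈ ⋃₀ F :=
    ZFSet.mem_sUnion_of_mem (ZFSet.mem_insert_of_mem _ (ZFSet.mem_insert _ _)) h
  exact ⟨ZFSet.mem_sUnion_of_mem (ZFSet.mem_insert _ _) hxy,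
    ZFSet.mem_sUnion_of_mem (ZFSet.mem_insert_of_mem _ (ZFSet.mem_insert _ _)) hxy⟩

theorem mem_relImage : y ∈ relImage F X ↔ ∃ x ∈ X, ZFSet.pair x y ∈ F :=
  ZFSet.mem_sep.trans (and_iff_right_of_imp fun ⟨_, _, h⟩ => (mem_sUnion_sUnion_of_pair_mem h).2)

theorem mem_relPreimage : x ∈ relPreimage F Y ↔ ∃ y ∈ Y, ZFSet.pair x y ∈ F :=
  ZFSet.mem_sep.trans (and_iff_right_of_imp fun ⟨_, _, h⟩ => (mem_sUnion_sUnion_of_pair_mem h).1)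

variable {D A : ZS} {fF fX fY : Fn A}

theorem Rep.relImage (hUF : IsUF D A) (hF : Rep D A F fF) (hX : Rep D A X fX) :
    Rep D A (relImage F X) fun p => relImage (fF p) (fX p) :=
  ((hF.sUnion hUF).sUnion hUF).sep hUF fun _ _ _ hy =>
    hX.exists_mem_iff hUF fun _ _ _ hx => (hx.pair hUF hy).mem_iff hUF hF

theorem Rep.relPreimage (hUF : IsUF D A) (hF : Rep D A F fF) (hY : Rep D A Y fY) :
    Rep D A (relPreimage F Y) fun p => relPreimage (fF p) (fY p) :=
  ((hF.sUnion hUF).sUnion hUF).sep hUF fun _ _ _ hx =>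
    hY.exists_mem_iff hUF fun _ _ _ hy => (hx.pair hUF hy).mem_iff hUF hF

theorem CodesFn.relPreimage_eq {g : Fn A} (hG : CodesFn F A g) :
    relPreimage F Y = sepOn A fun p => g p ∈ Y := by
  refine ZFSet.ext fun x => mem_relPreimage.trans ⟨fun ⟨y, hy, hxy⟩ => ?_, fun hx => ?_⟩
  · obtain ⟨x', hx', he⟩ := hG.1 _ hxy
    obtain ⟨rfl, rfl⟩ := ZFSet.pair_inj.1 he
    exact mem_sepOn.2 ⟨hx', hy⟩
  · obtain ⟨hx, hgx⟩ := mem_sepOn.1 hx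
    exact ⟨_, hgx, hG.2 x hx⟩

end Relations

section Embedding

variable {j : ZS → ZS} {B X Y x y : ZS}

noncomputable def graphOn (j : ZS → ZS) (B : ZS) : ZS := zimage (fun x => ZFSet.pair x (j x)) B

theorem pair_mem_graphOn : ZFSet.pair x y ∈ graphOn j B ↔ x ∈ B ∧ y = j x := by
  rw [graphOn, mem_zimage]
  constructor
  · rintro ⟨x', hx', he⟩
    obtain ⟨rfl, rfl⟩ := ZFSet.pair_inj.1 he
    exact ⟨hx', rfl⟩
  · rintro ⟨hx, rfl⟩
    exact ⟨x, hx, rfl⟩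

theorem ClosedUnderSeq.graphOn_mem {M : ZS → Prop} (h : ClosedUnderSeq M B) (hM : ∀ x, M (j x)) :
    M (graphOn j B) := by
  refine h _ ⟨fun p hp => ?_, fun x hx => ⟨j x, pair_mem_graphOn.2 ⟨hx, rfl⟩,
    fun y hy => (pair_mem_graphOn.1 hy).2⟩⟩ fun x y hxy => (pair_mem_graphOn.1 hxy).2 ▸ hM x
  obtain ⟨x, hx, rfl⟩ := mem_zimage.1 hp
  exact ⟨x, hx, j x, rfl⟩

theorem relImage_graphOn (hX : X ⊆ B) : relImage (graphOn j B) X = zimage j X :=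
  ZFSet.ext fun y => by
    simp only [mem_relImage, pair_mem_graphOn, mem_zimage]
    exact ⟨fun ⟨x, hx, _, he⟩ => ⟨x, hx, he.symm⟩, fun ⟨x, hx, he⟩ => ⟨x, hx, hX hx, he.symm⟩⟩

theorem relPreimage_graphOn_apply (hj : ∀ {x y}, j x ∈ j y ↔ x ∈ y) (hY : Y ⊆ B) :
    relPreimage (graphOn j B) (j Y) = Y :=
  ZFSet.ext fun x => by
    simp only [mem_relPreimage, pair_mem_graphOn]
    exact ⟨fun ⟨_, hy, _, he⟩ => hj.1 (he ▸ hy), fun hx => ⟨j x, hj.2 hx, hY hx, rfl⟩⟩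

theorem IsUltrapowerEmbV.exists_rep {M : ZS → Prop} (hj : IsUltrapowerEmbV M j) :
    ∃ A D : ZS, IsUF D A ∧ (∀ x, M x ↔ InUlt D A x) ∧ ∀ x, Rep D A (j x) fun _ => x := by
  obtain ⟨A, D, -, -, hD, hM, hj⟩ := hj
  exact ⟨A, D, hD.1, fun x => (hM x).trans
    ⟨fun ⟨f, _, hf⟩ => ⟨f, hf⟩, fun ⟨f, hf⟩ => ⟨f, coded_true f, hf⟩⟩, fun x => hj x trivial⟩

variable {D A : ZS}

theorem apply_mem_apply_iff (hUF : IsUF D A) (hj : ∀ x, Rep D A (j x) fun _ => x) :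
    j x ∈ j y ↔ x ∈ y :=
  ((hj x).mem_iff hUF (hj y)).trans Filter.eventually_const

theorem rep_of_subset (hUF : IsUF D A) (hj : ∀ x, Rep D A (j x) fun _ => x) {fF : Fn A}
    (hF : Rep D A (graphOn j B) fF) (hY : Y ⊆ B) : Rep D A Y fun p => relPreimage (fF p) Y := by
  have hrep := hF.relPreimage hUF (hj Y)
  rwa [relPreimage_graphOn_apply (apply_mem_apply_iff hUF hj) hY] at hrep

end Embedding

theorem IsElemClassEmb.mem_iff {M N : ZS → Prop} {i : ZS → ZS} (h : IsElemClassEmb M N i)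
    {a b : ZS} (ha : M a) (hb : M b) : i a ∈ i b ↔ a ∈ b := by
  obtain ⟨_, hi⟩ := h
  exact hi 2 (Language.Relations.formula₂ (PUnit.unit : setLang.Relations 2)
    (Language.Term.var 0) (Language.Term.var 1)) ![⟨a, ha⟩, ⟨b, hb⟩]

theorem mem_iff_eventually_mem_zimage {D γ E A B : ZS} {j : ZS → ZS}
    {g : {x : ZS // x ∈ A} → ZS} (hD : IsUF D γ) (hE : IsUF E A)
    (hj : ∀ {x y}, j x ∈ j y ↔ x ∈ y) (hg : ∀ᶠ p in hE.toUltrafilter, g p ∈ zimage j B)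
    (hseed : ∀ Z, (∀ᶠ p in hE.toUltrafilter, g p ∈ j Z) →
      ∀ᶠ x : {x : ZS // x ∈ γ} in hD.toUltrafilter, x.1 ∈ Z)
    {X : ZS} (hX : X ⊆ γ) :
    X ∈ D ↔ ∀ᶠ p in hE.toUltrafilter, g p ∈ zimage j X := by
  have hinj : Function.Injective j := fun x y h => ZFSet.ext fun z => by rw [← hj, h, hj]
  obtain ⟨π, hπ⟩ := (hg.mono fun _ hp => mem_zimage.1 hp).choice
  have hmap : hD.toUltrafilter.map Subtype.val = hE.toUltrafilter.map π := by
    refine Ultrafilter.coe_le_coe.1 fun Z (hZ : ∀ᶠ p in hE.toUltrafilter, π p ∈ Z) => ?_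
    refine (hseed (ZFSet.sep (· ∈ Z) B) ?_).mono fun _ hx => (ZFSet.mem_sep.1 hx).2
    filter_upwards [hZ, hπ] with p hpZ hpB
    rw [← hpB.2]
    exact hj.2 (ZFSet.mem_sep.2 ⟨hpB.1, hpZ⟩)
  calc X ∈ D ↔ ∀ᶠ x : {x : ZS // x ∈ γ} in hD.toUltrafilter, x.1 ∈ X := hD.mem_iff_eventually hX
    _ ↔ ∀ᶠ p in hE.toUltrafilter, π p ∈ X := by
      change {y | y ∈ X} ∈ hD.toUltrafilter.map Subtype.val ↔ {y | y ∈ X} ∈ hE.toUltrafilter.map π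
      rw [hmap]
    _ ↔ ∀ᶠ p in hE.toUltrafilter, g p ∈ zimage j X := Filter.eventually_congr <| hπ.mono
      fun p hp => by
        rw [← hp.2, mem_zimage]
        exact ⟨fun h => ⟨_, h, rfl⟩, fun ⟨x, hx, he⟩ => hinj he ▸ hx⟩

theorem statement1_general (lam : ZS) (hlam : IsCardZ lam)
    (M : ZS → Prop) (j : ZS → ZS) (hj : IsUltrapowerEmbV M j)
    (hclosed : ClosedUnderSeq M lam)
    (γ D : ZS) (hgle : zle γ lam) (hD : IsCCUF D γ)
    (jD : ZS → ZS) (hjD : ∀ x, Rep D γ (jD x) (fun _ => x))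
    (ξ : ZS) (hξ : Rep D γ ξ (fun p => p.1))
    (N : ZS → Prop) (k i : ZS → ZS)
    (hsemi : Semicomparison (InUlt D γ) M N jD j k i)
    (hseed : k ξ ∈ i (zimage j lam)) :
    M D := by
  obtain ⟨A0, D0, hD0, hM, hj⟩ := hj.exists_rep
  have hγ : γ ⊆ lam := by
    rcases hgle with h | rfl
    exacts [hlam.1.1.subset_of_mem h, fun _ h => h]
  obtain ⟨fF, hF⟩ := (hM _).1 (hclosed.graphOn_mem fun x => (hM _).2 ⟨_, hj x⟩)
  have hsub : ∀ {Y}, Y ⊆ lam → Rep D0 A0 Y fun p => relPreimage (fF p) Y :=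
    rep_of_subset hD0 hj hF
  have hjlam : M (zimage j lam) := (hM _).2
    ⟨_, relImage_graphOn (B := lam) (fun _ h => h) ▸ hF.relImage hD0 (hsub fun _ h => h)⟩
  obtain ⟨A1, E, -, hE, hEcc, -, hi⟩ := hsemi.internal1
  obtain ⟨g, ⟨G, hGM, hG⟩, hg, hξg⟩ := (repIn_iff.1 (hi _ hjlam)).1 _ hseed
  have hseedZ (Z : ZS) (hZ : ∀ᶠ p in hEcc.1.toUltrafilter, g p ∈ j Z) :
      ∀ᶠ x : {x : ZS // x ∈ γ} in hD.1.toUltrafilter, x.1 ∈ Z := by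
    have hkZ : k ξ ∈ k (jD Z) := (hsemi.comm Z).symm ▸
      hξg.mem_of_memSet_mem (hi _ ((hM _).2 ⟨_, hj Z⟩)) ⟨G, hGM, hG⟩ hZ
    exact (hξ.mem_iff hD.1 (hjD Z)).1 ((hsemi.elem0.mem_iff ⟨_, hξ⟩ ⟨_, hjD Z⟩).1 hkZ)
  have hDeq : D = ZFSet.sep (fun X => relPreimage G (relImage (graphOn j lam) X) ∈ E)
      (ZFSet.powerset γ) := hD.1.eq_sep_powerset fun X hX => by
    rw [relImage_graphOn fun _ h => hγ (hX h), hG.relPreimage_eq, hEcc.1.sepOn_mem_iff]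
    exact mem_iff_eventually_mem_zimage hD.1 hEcc.1 (apply_mem_apply_iff hD0 hj) hg hseedZ hX
  obtain ⟨fG, hfG⟩ := (hM G).1 hGM
  obtain ⟨fE, hfE⟩ := (hM E).1 hE
  rw [hDeq]
  exact (hM _).2 ⟨_, ((hsub hγ).powerset hD0 fun Y hY => ⟨_, hsub fun _ h => hγ (hY h)⟩).sep hD0
    (φ := fun p X => relPreimage (fG p) (relImage (fF p) X) ∈ fE p)
    fun _ _ _ hX => (hfG.relPreimage hD0 (hF.relImage hD0 hX)).mem_iff hD0 hfE⟩

/-- First attempt lemma. -/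
theorem statement1 (lam : ZS) (hlam : IsCardZ lam)
    (M : ZS → Prop) (j : ZS → ZS) (hj : IsUltrapowerEmbV M j)
    (hclosed : ClosedUnderSeq M lam)
    (γ D : ZS) (hγ : IsOrd γ) (hgle : zle γ lam) (hD : IsCCUF D γ)
    (jD : ZS → ZS) (hjD : ∀ x, Rep D γ (jD x) (fun _ => x))
    (ξ : ZS) (hξ : Rep D γ ξ (fun p => p.1))
    (N : ZS → Prop) (k i : ZS → ZS)
    (hsemi : Semicomparison (InUlt D γ) M N jD j k i)
    (hseed : k ξ ∈ i (zimage j lam)) :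
    M D :=
  statement1_general lam hlam M j hj hclosed γ D hgle hD jD hjD ξ hξ N k i hsemi hseed

end UAPaper
end

section
/- (Kunen) For a regular uncountable cardinal λ and a stationary set S ⊆ λ, ◇⁻(S) is equivalent to ◇(S). -/
open FirstOrder

/-!
`◇(S)` gives `◇⁻(S)` with singleton guesses. Conversely, enumerate each `𝒜 α` as
`⟨E α ξ : ξ < α⟩` and, using an injective pairing `p` on `λ`, read off for every `ξ < λ` the
candidate sequence `A^ξ_α = {β < α | p ξ β ∈ E α ξ}`. If every candidate fails, choose for each
`ξ` a counterexample `X ξ` together with a club `C ξ` on which it is never guessed, and code all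
of them into the single set `Y = {p ξ β | β ∈ X ξ}`. Then `◇⁻(S)` guesses `Y` at some `α ∈ S`
that is closed under `p` and lies in the diagonal intersection of the `C ξ`. There
`Y ∩ α = E α ξ` for some `ξ < α`, and decoding gives `X ξ ∩ α = A^ξ_α`, although `α ∈ C ξ`.
-/

namespace UAPaper

open Cardinal Set Order

universe u

theorem exists_mapsTo_injOn_of_mk_le {α β : Type u} [Nonempty β] {s : Set α} {t : Set β}
    (h : #s ≤ #t) : ∃ f : α → β, MapsTo f s t ∧ InjOn f s := by
  obtain ⟨e⟩ := h
  let f := Function.extend ((↑) : s → α) (fun x => (e x : β)) fun _ => Classical.arbitrary β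
  have hf : ∀ x : s, f x = e x := Subtype.val_injective.extend_apply _ _
  refine ⟨f, fun x hx => hf ⟨x, hx⟩ ▸ (e _).2, fun x hx y hy hxy => ?_⟩
  rw [hf ⟨x, hx⟩, hf ⟨y, hy⟩] at hxy
  exact congrArg Subtype.val (e.injective (Subtype.ext hxy))

theorem exists_subset_image_of_mk_le {α β : Type u} [Nonempty α] [Nonempty β] {s : Set α}
    {t : Set β} (h : #s ≤ #t) : ∃ E : β → α, s ⊆ E '' t := by
  obtain ⟨f, hmaps, hinj⟩ := exists_mapsTo_injOn_of_mk_le h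
  exact ⟨Function.invFunOn f s, fun a ha => ⟨f a, hmaps ha, hinj.leftInvOn_invFunOn ha⟩⟩

theorem exists_pairing {lam : Cardinal.{u}} (hinf : ℵ₀ ≤ lam) :
    ∃ p : Ordinal.{u} → Ordinal.{u} → Ordinal.{u},
      MapsTo (Function.uncurry p) (Iio lam.ord ×ˢ Iio lam.ord) (Iio lam.ord) ∧
      InjOn (Function.uncurry p) (Iio lam.ord ×ˢ Iio lam.ord) := by
  have hcard : #(Iio lam.ord ×ˢ Iio lam.ord) ≤ #(Iio lam.ord) := by
    rw [mk_congr (Equiv.Set.prod _ _), mk_prod, lift_id, mul_eq_self (by simpa using hinf)]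
  obtain ⟨f, hmaps, hinj⟩ := exists_mapsTo_injOn_of_mk_le hcard
  exact ⟨Function.curry f, hmaps, hinj⟩

theorem iSup_Iio_lt_ord {lam : Cardinal.{u}} (hreg : lam.IsRegular) {a : Ordinal.{u}}
    (ha : a < lam.ord) {f : Iio a → Ordinal.{u}} (hf : ∀ i, f i < lam.ord) :
    ⨆ i, f i < lam.ord := by
  apply Ordinal.lift_iSup_lt_of_lt_cof _ hf
  rwa [← Ordinal.lift_cof, hreg.cof_ord, mk_Iio_ordinal, lift_lift, lift_lt, ← lt_ord]

def closurePoints (F : Ordinal.{u} → Ordinal.{u} → Ordinal.{u}) : Set Ordinal.{u} :=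
  {β | ∀ ξ < β, ∀ η < β, F ξ η < β}

theorem isClub_closurePoints {lam : Cardinal.{u}} (hreg : lam.IsRegular) (hunc : ℵ₀ < lam)
    {F : Ordinal.{u} → Ordinal.{u} → Ordinal.{u}}
    (hF : ∀ ξ < lam.ord, ∀ η < lam.ord, F ξ η < lam.ord) :
    IsClub lam.ord (Iio lam.ord ∩ closurePoints F) := by
  have hsucc : ∀ δ < lam.ord, succ δ < lam.ord :=
    fun _ => (Cardinal.isSuccLimit_ord hreg.aleph0_le).succ_lt
  -- a closure point above `α` is `nfp f (succ α)`, the supremum of the `ω` iterates of `f`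
  let f : Ordinal.{u} → Ordinal.{u} := fun δ =>
    max (succ δ) (⨆ ξ : Iio (succ δ), ⨆ η : Iio (succ δ), succ (F ξ η))
  have hf_lt : ∀ δ < lam.ord, f δ < lam.ord := fun δ hδ =>
    max_lt (hsucc δ hδ) <| iSup_Iio_lt_ord hreg (hsucc δ hδ) fun ξ =>
      iSup_Iio_lt_ord hreg (hsucc δ hδ) fun η =>
        hsucc _ (hF _ (lt_of_lt_of_le ξ.2 (succ_le_of_lt hδ)) _
          (lt_of_lt_of_le η.2 (succ_le_of_lt hδ)))
  have lt_f : ∀ δ, ∀ ξ ≤ δ, ∀ η ≤ δ, F ξ η < f δ := fun δ ξ hξ η hη =>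
    calc F ξ η < succ (F ξ η) := lt_succ _
      _ ≤ ⨆ η : Iio (succ δ), succ (F ξ η) :=
        Ordinal.le_iSup (fun η : Iio (succ δ) => succ (F ξ η)) ⟨η, lt_succ_of_le hη⟩
      _ ≤ ⨆ ξ : Iio (succ δ), ⨆ η : Iio (succ δ), succ (F ξ η) :=
        Ordinal.le_iSup (fun ξ : Iio (succ δ) => ⨆ η : Iio (succ δ), succ (F ξ η))
          ⟨ξ, lt_succ_of_le hξ⟩
      _ ≤ f δ := le_max_right _ _
  have hiter : ∀ a, Monotone fun n => f^[n] a := fun a m n hmn =>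
    Function.monotone_iterate_of_id_le (fun δ => (lt_succ δ).le.trans (le_max_left _ _)) hmn a
  refine ⟨fun β hβ => hβ.1, fun α hα => ?_, fun β hβ _ hlim => ⟨hβ, fun ξ hξ η hη => ?_⟩⟩
  · refine ⟨Ordinal.nfp f (succ α), ⟨Cardinal.nfp_lt_ord_of_isRegular hreg hunc.ne' hf_lt
      (hsucc α hα), fun ξ hξ η hη => ?_⟩, (lt_succ α).trans_le (Ordinal.le_nfp _ _)⟩
    obtain ⟨m, hm⟩ := Ordinal.lt_nfp_iff.1 hξ
    obtain ⟨n, hn⟩ := Ordinal.lt_nfp_iff.1 hη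
    calc F ξ η < f (f^[max m n] (succ α)) :=
          lt_f _ _ (hm.le.trans (hiter _ (le_max_left m n)))
            _ (hn.le.trans (hiter _ (le_max_right m n)))
      _ = f^[max m n + 1] (succ α) := (Function.iterate_succ_apply' f _ _).symm
      _ ≤ Ordinal.nfp f (succ α) := Ordinal.iterate_le_nfp _ _ _
  · obtain ⟨δ, hδ, hδξη, hδβ⟩ := hlim (max ξ η) (max_lt hξ hη)
    exact (hδ.2 ξ ((le_max_left ξ η).trans_lt hδξη) η
      ((le_max_right ξ η).trans_lt hδξη)).trans hδβ

theorem exists_isClub_subset_closurePoints_diagInter {lam : Cardinal.{u}} (hreg : lam.IsRegular)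
    (hunc : ℵ₀ < lam) {p : Ordinal.{u} → Ordinal.{u} → Ordinal.{u}}
    (hp : ∀ ξ < lam.ord, ∀ η < lam.ord, p ξ η < lam.ord) {C : Ordinal.{u} → Set Ordinal.{u}}
    (hC : ∀ ξ < lam.ord, IsClub lam.ord (C ξ)) :
    ∃ D, IsClub lam.ord D ∧ ∀ α ∈ D, α ∈ closurePoints p ∧ ∀ ξ < α, α ∈ C ξ := by
  have hnext : ∀ ξ η, ∃ δ, ξ < lam.ord → η < lam.ord → δ ∈ C ξ ∧ η < δ := fun ξ η => by
    by_cases h : ξ < lam.ord ∧ η < lam.ord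
    · obtain ⟨δ, hδ, hηδ⟩ := (hC ξ h.1).2.1 η h.2
      exact ⟨δ, fun _ _ => ⟨hδ, hηδ⟩⟩
    · exact ⟨0, fun hξ hη => absurd ⟨hξ, hη⟩ h⟩
  choose next hnext using hnext
  refine ⟨_, isClub_closurePoints hreg hunc (F := fun ξ η => max (p ξ η) (next ξ η))
    fun ξ hξ η hη => max_lt (hp ξ hξ η hη) ((hC ξ hξ).1 _ (hnext ξ η hξ hη).1),
    fun α ⟨hα, hαF⟩ => ⟨fun ξ hξ η hη => (le_max_left _ _).trans_lt (hαF ξ hξ η hη),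
      fun ξ hξ => (hC ξ (hξ.trans hα)).2.2 α hα (pos_of_gt hξ) fun γ hγ => ?_⟩⟩
  have hnextγ := hnext ξ γ (hξ.trans hα) (hγ.trans hα)
  exact ⟨next ξ γ, hnextγ.1, hnextγ.2, (le_max_right _ _).trans_lt (hαF ξ hξ γ hγ)⟩

theorem IsClub.inter_Ioi_zero {κ : Ordinal.{u}} {C : Set Ordinal.{u}} (hC : IsClub κ C) :
    IsClub κ (C ∩ Ioi 0) := by
  refine ⟨fun α hα => hC.1 α hα.1, fun α hα => ?_, fun β hβ hβ0 hlim => ?_⟩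
  · obtain ⟨β, hβC, hαβ⟩ := hC.2.1 α hα
    exact ⟨β, ⟨hβC, pos_of_gt hαβ⟩, hαβ⟩
  · refine ⟨hC.2.2 β hβ hβ0 fun γ hγ => ?_, hβ0⟩
    obtain ⟨δ, hδ, hγδ, hδβ⟩ := hlim γ hγ
    exact ⟨δ, hδ.1, hγδ, hδβ⟩

def pairCode (p : Ordinal.{u} → Ordinal.{u} → Ordinal.{u}) (κ : Ordinal.{u})
    (X : Ordinal.{u} → Set Ordinal.{u}) : Set Ordinal.{u} :=
  {γ | ∃ ξ < κ, ∃ β ∈ X ξ, p ξ β = γ}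

section PairCode

variable {p : Ordinal.{u} → Ordinal.{u} → Ordinal.{u}} {κ : Ordinal.{u}}
  {X : Ordinal.{u} → Set Ordinal.{u}}

theorem pairCode_subset_Iio (hp : MapsTo (Function.uncurry p) (Iio κ ×ˢ Iio κ) (Iio κ))
    (hX : ∀ ξ < κ, X ξ ⊆ Iio κ) : pairCode p κ X ⊆ Iio κ := by
  rintro _ ⟨ξ, hξ, β, hβ, rfl⟩
  exact hp (mk_mem_prod hξ (hX ξ hξ hβ))

theorem preimage_pairCode_inter_Iio {α ξ : Ordinal.{u}}
    (hinj : InjOn (Function.uncurry p) (Iio κ ×ˢ Iio κ)) (hX : ∀ ξ < κ, X ξ ⊆ Iio κ)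
    (hακ : α ≤ κ) (hα : α ∈ closurePoints p) (hξ : ξ < α) :
    p ξ ⁻¹' (pairCode p κ X ∩ Iio α) ∩ Iio α = X ξ ∩ Iio α := by
  ext β
  simp only [pairCode, mem_inter_iff, mem_preimage, mem_ofPred_eq, mem_Iio]
  constructor
  · rintro ⟨⟨⟨ξ', hξ', β', hβ', hp⟩, -⟩, hβ⟩
    obtain ⟨rfl, rfl⟩ := Prod.ext_iff.1 <| hinj (mk_mem_prod hξ' (hX ξ' hξ' hβ'))
      (mk_mem_prod (hξ.trans_le hακ) (hβ.trans_le hακ)) hp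
    exact ⟨hβ', hβ⟩
  · rintro ⟨hβX, hβ⟩
    exact ⟨⟨⟨ξ, hξ.trans_le hακ, β, hβX, rfl⟩, hα ξ hξ β hβ⟩, hβ⟩

end PairCode

theorem exists_isClub_forall_ne_of_not_diamond {κ : Ordinal.{u}} {S : Set Ordinal.{u}}
    (hS : ∀ α ∈ S, α < κ) (h : ¬ Diamond κ S) {A : Ordinal.{u} → Set Ordinal.{u}}
    (hA : ∀ α ∈ S, A α ⊆ Iio α) :
    ∃ X ⊆ Iio κ, ∃ C, IsClub κ C ∧ ∀ α ∈ S, α ∈ C → X ∩ Iio α ≠ A α := by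
  by_contra! hguess
  refine h ⟨A, hA, fun X hX => ⟨fun α hα => hS α hα.1, fun C hC => ?_⟩⟩
  obtain ⟨α, hαS, hαC, hαX⟩ := hguess X hX C hC
  exact ⟨α, ⟨hαS, hαX⟩, hαC⟩

theorem diamond_of_diamondMinus {lam : Cardinal.{u}} (hreg : lam.IsRegular) (hunc : ℵ₀ < lam)
    {S : Set Ordinal.{u}} (hS : ∀ α ∈ S, α < lam.ord) (h : DiamondMinus lam.ord S) :
    Diamond lam.ord S := by
  obtain ⟨𝒜, -, h𝒜card, h𝒜⟩ := h
  obtain ⟨p, hp, hpinj⟩ := exists_pairing hreg.aleph0_le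
  have hE : ∀ α, ∃ E : Ordinal.{u} → Set Ordinal.{u}, α ∈ S → 𝒜 α ⊆ E '' Iio α := fun α => by
    by_cases hα : α ∈ S
    · obtain ⟨E, hE⟩ := exists_subset_image_of_mk_le (h𝒜card α hα)
      exact ⟨E, fun _ => hE⟩
    · exact ⟨fun _ => ∅, fun h => absurd h hα⟩
  choose E hE using hE
  by_contra hnd
  choose X hX C hC hne using fun ξ => exists_isClub_forall_ne_of_not_diamond hS hnd
    (A := fun α => p ξ ⁻¹' E α ξ ∩ Iio α) fun _ _ => inter_subset_right
  obtain ⟨D, hD, hDp⟩ := exists_isClub_subset_closurePoints_diagInter hreg hunc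
    (fun ξ hξ η hη => hp (mk_mem_prod hξ hη)) fun ξ _ => hC ξ
  obtain ⟨α, ⟨hαS, hα𝒜⟩, hαD⟩ :=
    (h𝒜 (pairCode p lam.ord X) (pairCode_subset_Iio hp fun ξ _ => hX ξ)).2 D hD
  obtain ⟨ξ, hξ, hξE⟩ := hE α hαS hα𝒜
  obtain ⟨hαp, hαC⟩ := hDp α hαD
  refine hne ξ α hαS (hαC ξ hξ) ?_
  rw [hξE, preimage_pairCode_inter_Iio hpinj (fun ξ _ => hX ξ) (hS α hαS).le hαp hξ]

theorem diamondMinus_of_diamond {κ : Ordinal.{u}} {S : Set Ordinal.{u}} (hS : ∀ α ∈ S, α < κ)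
    (h : Diamond κ S) : DiamondMinus κ S := by
  obtain ⟨A, hA, hguess⟩ := h
  -- `#(𝒜 0) ≤ #(Iio 0) = 0` forces `𝒜 0 = ∅`
  refine ⟨fun α => if α = 0 then ∅ else {A α}, fun α hα a ha => ?_, fun α _ => ?_,
    fun X hX => ⟨fun α hα => hS α hα.1, fun C hC => ?_⟩⟩
  · dsimp only at ha
    split_ifs at ha with hα0
    · exact absurd ha (notMem_empty a)
    · exact (mem_singleton_iff.1 ha) ▸ hA α hα
  · dsimp only
    split_ifs with hα0
    · simp
    · rw [mk_singleton, Cardinal.one_le_iff_ne_zero, mk_ne_zero_iff]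
      exact ⟨⟨0, pos_iff_ne_zero.2 hα0⟩⟩
  · obtain ⟨α, ⟨hαS, hαX⟩, hαC, hα0⟩ :=
      (hguess X hX).2 _ hC.inter_Ioi_zero
    exact ⟨α, ⟨hαS, by simp only [if_neg (mem_Ioi.1 hα0).ne', hαX, mem_singleton]⟩, hαC⟩

/-- Kunen: `◇⁻(S)` is equivalent to `◇(S)`. -/
theorem statement9 (lam : Cardinal) (hreg : lam.IsRegular) (hunc : Cardinal.aleph0 < lam)
    (S : Set Ordinal) (hstat : IsStationary lam.ord S) :
    DiamondMinus lam.ord S ↔ Diamond lam.ord S :=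
  ⟨diamond_of_diamondMinus hreg hunc hstat.1, diamondMinus_of_diamond hstat.1⟩

end UAPaper
end
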